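/- arXiv:1508.01158 — 3 statements merged into one kernel-verified Lean document; each statement's English description precedes it below -/
import Mathlib

section
/- For every natural number n, the number of partitions of an n-element finite set equals Σ_{i=0}^{n} (1/i!) · Σ_{j=0}^{i} (−1)^{i−j} · C(i,j) · j^n, where the equality is of real numbers and C(i,j) denotes the binomial coefficient. -/
/-!
Partitions of a set `α` with `n` elements are the same as equivalence relations on it. A surjection
`α → Fin k` is the same as an equivalence relation with `k` classes together with a bijection
from its classes to `Fin k`, so there are `k! · S(n, k)` of them, `S(n, k)` being the number of
equivalence relations with `k` classes. Inclusion–exclusion over the set of values a map misses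
counts the same surjections as `Σ_j (-1)^(k-j) C(k, j) j^n`. Summing `S(n, k)` over `k ≤ n`
gives the formula.
-/

open Finset Function Fintype

theorem Nat.card_equiv_eq_ite {α β : Type*} [Finite α] [Finite β] :
    Nat.card (α ≃ β) = if Nat.card α = Nat.card β then (Nat.card β).factorial else 0 := by
  split_ifs with h
  · obtain ⟨e⟩ := Finite.card_eq.1 h
    rw [Nat.card_congr (e.equivCongr (Equiv.refl β)), Nat.card_perm]
  · have : IsEmpty (α ≃ β) := ⟨fun e => h (Nat.card_congr e)⟩
    exact Nat.card_of_isEmpty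

section Surjections

variable {α β : Type*} [Fintype α] [Fintype β]

theorem Fintype.card_surjective_eq_sum_powerset :
    (Nat.card {f : α → β // Surjective f} : ℤ) =
      ∑ t : Finset β, (-1) ^ #t * ((card β - #t : ℕ) : ℤ) ^ card α := by
  classical
  have avoiding (t : Finset β) :
      t.inf (fun b => piFinset fun _ : α => {b}ᶜ) = piFinset fun _ => tᶜ := by
    ext f
    simp only [mem_inf, mem_piFinset, mem_compl, mem_singleton]
    grind
  have surjective : univ.inf (fun b => (piFinset fun _ : α => ({b}ᶜ : Finset β))ᶜ) =
      ({f | Surjective f} : Finset (α → β)) := by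
    ext f
    rw [mem_filter_univ]
    simp [mem_inf, Surjective]
  rw [Nat.card_eq_fintype_card, Fintype.card_subtype, ← surjective,
    inclusion_exclusion_card_inf_compl]
  refine Finset.sum_congr rfl fun t _ => ?_
  rw [avoiding, card_piFinset, prod_const, card_compl, card_univ, Nat.cast_pow]

theorem Fintype.card_surjective_eq_alternating_sum :
    (Nat.card {f : α → β // Surjective f} : ℤ) =
      ∑ j ∈ range (card β + 1),
        (-1) ^ (card β - j) * ((card β).choose j : ℤ) * (j : ℤ) ^ card α := by
  rw [card_surjective_eq_sum_powerset, ← powerset_univ,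
    sum_powerset_apply_card (fun m => (-1) ^ m * ((card β - m : ℕ) : ℤ) ^ card α), card_univ,
    ← sum_range_reflect]
  refine Finset.sum_congr rfl fun j hj => ?_
  have hj : j ≤ card β := Nat.lt_succ_iff.1 (mem_range.1 hj)
  rw [Nat.add_sub_cancel, Nat.sub_sub_self hj, Nat.choose_symm hj, nsmul_eq_mul]
  ring

end Surjections

namespace Setoid

variable {α β : Type*}

instance [Finite α] : Finite (Setoid α) :=
  .of_injective (fun s : Setoid α => ⇑s) fun _ _ h =>
    Setoid.ext fun x y => iff_of_eq (congrFun₂ h x y)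

theorem card_partitions_eq_card_setoid :
    Nat.card {P : Set (Set α) // IsPartition P} = Nat.card (Setoid α) :=
  (Nat.card_congr (Partition.orderIso α).toEquiv).symm

theorem ker_comp_mk {s : Setoid α} {f : Quotient s → β} (hf : Injective f) :
    ker (f ∘ Quotient.mk s) = s :=
  Setoid.ext fun _ _ => hf.eq_iff.trans Quotient.eq

theorem bijective_sigma_quotientEquiv_to_surjective :
    Bijective fun p : Σ s : Setoid α, Quotient s ≃ β =>
      (⟨p.2 ∘ Quotient.mk p.1, p.2.surjective.comp Quotient.mk_surjective⟩ :
        {f : α → β // Surjective f}) := by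
  constructor
  · rintro ⟨s, e⟩ ⟨s', e'⟩ h
    have h' : e ∘ Quotient.mk s = e' ∘ Quotient.mk s' := congrArg Subtype.val h
    obtain rfl : s = s' := by rw [← ker_comp_mk e.injective, h', ker_comp_mk e'.injective]
    obtain rfl : e = e' := Equiv.ext fun q => Quotient.inductionOn q (congrFun h')
    rfl
  · rintro ⟨f, hf⟩
    exact ⟨⟨ker f, quotientKerEquivOfSurjective f hf⟩, rfl⟩

theorem card_surjective_eq_factorial_mul [Finite α] [Finite β] :
    Nat.card {f : α → β // Surjective f} =
      (Nat.card β).factorial * Nat.card {s : Setoid α // Nat.card (Quotient s) = Nat.card β} := by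
  classical
  have := Fintype.ofFinite (Setoid α)
  rw [← Nat.card_eq_of_bijective _ bijective_sigma_quotientEquiv_to_surjective, Nat.card_sigma]
  simp_rw [Nat.card_equiv_eq_ite, Finset.sum_ite, Finset.sum_const_zero, add_zero,
    Finset.sum_const, smul_eq_mul, mul_comm]
  rw [← Fintype.card_subtype, ← Nat.card_eq_fintype_card]

theorem card_eq_sum_card_quotient_eq [Finite α] :
    Nat.card (Setoid α) =
      ∑ k ∈ range (Nat.card α + 1), Nat.card {s : Setoid α // Nat.card (Quotient s) = k} := by
  classical
  have := Fintype.ofFinite (Setoid α)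
  rw [Nat.card_eq_fintype_card, ← Finset.card_univ,
    card_eq_sum_card_fiberwise (f := fun s : Setoid α => Nat.card (Quotient s))
      (t := range (Nat.card α + 1))]
  · simp_rw [Nat.card_eq_fintype_card, Fintype.card_subtype]
  · intro s _
    exact mem_range.2 (Nat.lt_succ_of_le (Nat.card_le_card_of_surjective _ Quotient.mk_surjective))

theorem card_quotient_eq_eq_alternating_sum {K : Type*} [Field K] [CharZero K] [Fintype α]
    (k : ℕ) :
    (Nat.card {s : Setoid α // Nat.card (Quotient s) = k} : K) =
      1 / (k.factorial : K) *
        ∑ j ∈ range (k + 1), (-1) ^ (k - j) * (k.choose j : K) * (j : K) ^ card α := by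
  have labellings := card_surjective_eq_factorial_mul (α := α) (β := Fin k)
  have incl_excl := Fintype.card_surjective_eq_alternating_sum (α := α) (β := Fin k)
  rw [Nat.card_fin] at labellings
  rw [Fintype.card_fin] at incl_excl
  have hk : (k.factorial : K) ≠ 0 := Nat.cast_ne_zero.2 k.factorial_ne_zero
  rw [one_div, eq_inv_mul_iff_mul_eq₀ hk]
  exact_mod_cast labellings ▸ incl_excl

end Setoid

/-- The number of partitions of an `n`-element set (the `n`-th Bell number) equals
`Σ_{i=0}^{n} (1/i!) Σ_{j=0}^{i} (−1)^{i−j} C(i,j) j^n`. -/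
theorem card_partitions_eq_bell_formula (n : ℕ) :
    (Nat.card {P : Set (Set (Fin n)) // Setoid.IsPartition P} : ℝ) =
      ∑ i ∈ range (n + 1), (1 / (Nat.factorial i : ℝ)) *
        ∑ j ∈ range (i + 1), (-1 : ℝ) ^ (i - j) * (Nat.choose i j : ℝ) * (j : ℝ) ^ n := by
  rw [Setoid.card_partitions_eq_card_setoid, Setoid.card_eq_sum_card_quotient_eq, Nat.card_fin]
  push_cast
  simp_rw [Setoid.card_quotient_eq_eq_alternating_sum, Fintype.card_fin]
end

section
/- Let Q and R be partitions of a finite set M with Σ_j (|Q_j| − 1) > 0, where Q_j ranges over the blocks of Q. Then the MITRE recall R_Q = (Σ_j (|Q_j| − |π_R(Q_j)|)) / (Σ_j (|Q_j| − 1)) equals 1 if and only if Q refines R, i.e. every block of Q is contained in some block of R. -/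
open Finset

/-- The number of parts of the partition `π_R(s)` of a set `s` induced by the
partition `R`: the number of blocks of `R` meeting `s`. -/
def inducedPartsCard {M : Type*} [Fintype M] [DecidableEq M]
    (R : Finpartition (univ : Finset M)) (s : Finset M) : ℕ :=
  (R.parts.filter fun r => (s ∩ r).Nonempty).card

/-- The MITRE recall of `Q` with respect to `R`. -/
noncomputable def mitreRecall {M : Type*} [Fintype M] [DecidableEq M]
    (Q R : Finpartition (univ : Finset M)) : ℝ :=
  (∑ j ∈ Q.parts, ((j.card : ℝ) - (inducedPartsCard R j : ℝ))) /
    (∑ j ∈ Q.parts, ((j.card : ℝ) - 1))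

lemma one_le_inducedPartsCard {M : Type*} [Fintype M] [DecidableEq M]
    (R : Finpartition (univ : Finset M)) {s : Finset M} (hs : s.Nonempty) :
    1 ≤ inducedPartsCard R s := by
  obtain ⟨x, hx⟩ := hs
  obtain ⟨r, hr, hxr⟩ := R.exists_mem (mem_univ x)
  have : r ∈ R.parts.filter fun r => (s ∩ r).Nonempty :=
    mem_filter.mpr ⟨hr, ⟨x, mem_inter.mpr ⟨hx, hxr⟩⟩⟩
  exact Finset.card_pos.mpr ⟨r, this⟩

lemma inducedPartsCard_eq_one_iff {M : Type*} [Fintype M] [DecidableEq M]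
    (R : Finpartition (univ : Finset M)) {s : Finset M} (hs : s.Nonempty) :
    inducedPartsCard R s = 1 ↔ ∃ r ∈ R.parts, s ⊆ r := by
  constructor
  · intro h1
    obtain ⟨r, hr⟩ := Finset.card_eq_one.mp h1
    have hrmem : r ∈ R.parts.filter fun r => (s ∩ r).Nonempty := by
      rw [hr]; exact mem_singleton_self r
    refine ⟨r, (mem_filter.mp hrmem).1, fun x hx => ?_⟩
    obtain ⟨r', hr', hxr'⟩ := R.exists_mem (mem_univ x)
    have : r' ∈ R.parts.filter fun r => (s ∩ r).Nonempty :=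
      mem_filter.mpr ⟨hr', ⟨x, mem_inter.mpr ⟨hx, hxr'⟩⟩⟩
    rw [hr, mem_singleton] at this
    exact this ▸ hxr'
  · rintro ⟨r, hr, hsr⟩
    rw [inducedPartsCard, Finset.card_eq_one]
    refine ⟨r, Finset.eq_singleton_iff_unique_mem.mpr ⟨?_, ?_⟩⟩
    · exact mem_filter.mpr ⟨hr, hs.mono (subset_inter subset_rfl hsr)⟩
    · intro r' hr'
      obtain ⟨hr'p, x, hx⟩ := mem_filter.mp hr'
      obtain ⟨hxs, hxr'⟩ := mem_inter.mp hx
      exact R.eq_of_mem_parts hr'p hr hxr' (hsr hxs)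

/-- If `Σ_j (|Q_j| − 1) > 0`, the MITRE recall of `Q` with respect to `R` equals 1
if and only if `Q` refines `R`, i.e. every block of `Q` is contained in some block
of `R`. -/
theorem mitreRecall_eq_one_iff_refines {M : Type*} [Fintype M] [DecidableEq M]
    (Q R : Finpartition (univ : Finset M))
    (h : 0 < ∑ j ∈ Q.parts, ((j.card : ℝ) - 1)) :
    mitreRecall Q R = 1 ↔ ∀ j ∈ Q.parts, ∃ r ∈ R.parts, j ⊆ r := by
  have hle : ∀ j ∈ Q.parts, ((j.card : ℝ) - (inducedPartsCard R j : ℝ)) ≤ ((j.card : ℝ) - 1) := by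
    intro j hj
    have := one_le_inducedPartsCard R (Q.nonempty_of_mem_parts hj)
    have : (1 : ℝ) ≤ (inducedPartsCard R j : ℝ) := by exact_mod_cast this
    linarith
  rw [mitreRecall, div_eq_one_iff_eq h.ne']
  rw [Finset.sum_eq_sum_iff_of_le hle]
  constructor
  · intro heq j hj
    have := heq j hj
    have h1 : (inducedPartsCard R j : ℝ) = 1 := by linarith
    exact (inducedPartsCard_eq_one_iff R (Q.nonempty_of_mem_parts hj)).mp (by exact_mod_cast h1)
  · intro href j hj
    have h1 : inducedPartsCard R j = 1 :=
      (inducedPartsCard_eq_one_iff R (Q.nonempty_of_mem_parts hj)).mpr (href j hj)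
    rw [h1]; norm_num
end

section
/- Let Q and R be partitions of a finite set M in which every block has size at least 2. Then the G-MITRE loss Δ_GM(Q, R) = 1 − 2·R_Q·R_R/(R_Q + R_R) (defined when R_Q + R_R > 0) satisfies Δ_GM(Q, R) = 0 if and only if Q = R. -/
open Finset

/-- The G-MITRE loss `Δ_GM(Q,R) = 1 − 2·R_Q·R_R/(R_Q + R_R)`, one minus the
harmonic mean (F₁ score) of the two MITRE recalls. -/
noncomputable def gMitreLoss {M : Type*} [Fintype M] [DecidableEq M]
    (Q R : Finpartition (univ : Finset M)) : ℝ :=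
  1 - 2 * mitreRecall Q R * mitreRecall R Q / (mitreRecall Q R + mitreRecall R Q)

section Aux
variable {M : Type*} [Fintype M] [DecidableEq M]

lemma one_le_induced (Q R : Finpartition (univ : Finset M)) {j : Finset M}
    (hj : j ∈ Q.parts) : 1 ≤ inducedPartsCard R j := by
  obtain ⟨x, hx⟩ := Q.nonempty_of_mem_parts hj
  obtain ⟨r, hr, hxr⟩ := R.exists_mem (mem_univ x)
  refine Finset.card_pos.mpr ⟨r, mem_filter.mpr ⟨hr, ⟨x, mem_inter.mpr ⟨hx, hxr⟩⟩⟩⟩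

lemma induced_le_card (R : Finpartition (univ : Finset M)) {j : Finset M}
    (hj : j.Nonempty) : inducedPartsCard R j ≤ j.card := by
  classical
  apply Finset.card_le_card_of_injOn
    (fun r => if h : (j ∩ r).Nonempty then h.choose else hj.choose)
  · intro r hr
    have h := (mem_filter.mp hr).2
    simp only [h, dif_pos]
    exact (mem_inter.mp h.choose_spec).1
  · intro r1 h1 r2 h2 heq
    have hn1 := (mem_filter.mp h1).2
    have hn2 := (mem_filter.mp h2).2
    simp only [hn1, hn2, dif_pos] at heq
    have m1 := (mem_inter.mp hn1.choose_spec).2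
    have m2 := (mem_inter.mp hn2.choose_spec).2
    rw [heq] at m1
    exact R.eq_of_mem_parts (mem_filter.mp h1).1 (mem_filter.mp h2).1 m1 m2

lemma induced_eq_one_of_subset {R : Finpartition (univ : Finset M)} {j r : Finset M}
    (hj : j.Nonempty) (hr : r ∈ R.parts) (hsub : j ⊆ r) : inducedPartsCard R j = 1 := by
  have : (R.parts.filter fun r' => (j ∩ r').Nonempty) = {r} := by
    ext r'
    simp only [mem_filter, mem_singleton]
    constructor
    · rintro ⟨hr', ⟨x, hx⟩⟩
      obtain ⟨hxj, hxr'⟩ := mem_inter.mp hx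
      exact R.eq_of_mem_parts hr' hr hxr' (hsub hxj)
    · rintro rfl
      exact ⟨hr, hj.mono (by simp [Finset.subset_inter (le_refl j) hsub])⟩
  simp [inducedPartsCard, this]

lemma subset_of_induced_eq_one {R : Finpartition (univ : Finset M)} {j : Finset M}
    (hj : j.Nonempty) (h : inducedPartsCard R j = 1) :
    ∃ r ∈ R.parts, j ⊆ r := by
  obtain ⟨r, hrset⟩ := Finset.card_eq_one.mp h
  have hr : r ∈ R.parts := by
    have := hrset ▸ (Finset.mem_singleton_self r)
    exact (mem_filter.mp this).1
  refine ⟨r, hr, fun x hx => ?_⟩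
  obtain ⟨r', hr', hxr'⟩ := R.exists_mem (mem_univ x)
  have : r' ∈ R.parts.filter fun r'' => (j ∩ r'').Nonempty :=
    mem_filter.mpr ⟨hr', ⟨x, mem_inter.mpr ⟨hx, hxr'⟩⟩⟩
  rw [hrset, mem_singleton] at this
  exact this ▸ hxr'

lemma denom_nonneg (Q : Finpartition (univ : Finset M)) :
    0 ≤ ∑ j ∈ Q.parts, ((j.card : ℝ) - 1) := by
  apply Finset.sum_nonneg
  intro j hj
  have := Q.nonempty_of_mem_parts hj
  have : 1 ≤ j.card := Finset.card_pos.mpr this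
  have : (1 : ℝ) ≤ j.card := by exact_mod_cast this
  linarith

lemma num_le_denom (Q R : Finpartition (univ : Finset M)) :
    ∑ j ∈ Q.parts, ((j.card : ℝ) - (inducedPartsCard R j : ℝ)) ≤
      ∑ j ∈ Q.parts, ((j.card : ℝ) - 1) := by
  apply Finset.sum_le_sum
  intro j hj
  have := one_le_induced Q R hj
  have : (1 : ℝ) ≤ inducedPartsCard R j := by exact_mod_cast this
  linarith

lemma num_nonneg (Q R : Finpartition (univ : Finset M)) :
    0 ≤ ∑ j ∈ Q.parts, ((j.card : ℝ) - (inducedPartsCard R j : ℝ)) := by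
  apply Finset.sum_nonneg
  intro j hj
  have := induced_le_card R (Q.nonempty_of_mem_parts hj)
  have : (inducedPartsCard R j : ℝ) ≤ j.card := by exact_mod_cast this
  linarith

lemma recall_nonneg (Q R : Finpartition (univ : Finset M)) : 0 ≤ mitreRecall Q R :=
  div_nonneg (num_nonneg Q R) (denom_nonneg Q)

lemma recall_le_one (Q R : Finpartition (univ : Finset M)) : mitreRecall Q R ≤ 1 := by
  unfold mitreRecall
  rcases eq_or_lt_of_le (denom_nonneg Q) with h | h
  · rw [← h, div_zero]; norm_num
  · exact (div_le_one h).mpr (num_le_denom Q R)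

lemma refines_of_recall_eq_one {Q R : Finpartition (univ : Finset M)}
    (h : mitreRecall Q R = 1) : ∀ j ∈ Q.parts, ∃ r ∈ R.parts, j ⊆ r := by
  have hD : (∑ j ∈ Q.parts, ((j.card : ℝ) - 1)) ≠ 0 := by
    intro h0
    rw [mitreRecall, h0, div_zero] at h
    norm_num at h
  have hND : ∑ j ∈ Q.parts, ((j.card : ℝ) - (inducedPartsCard R j : ℝ)) =
      ∑ j ∈ Q.parts, ((j.card : ℝ) - 1) := by
    have := (div_eq_one_iff_eq hD).mp h
    exact this
  have key := (Finset.sum_eq_sum_iff_of_le (fun j hj => by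
    have := one_le_induced Q R hj
    have : (1 : ℝ) ≤ inducedPartsCard R j := by exact_mod_cast this
    linarith : ∀ j ∈ Q.parts, ((j.card : ℝ) - (inducedPartsCard R j : ℝ)) ≤ (j.card : ℝ) - 1)).mp hND
  intro j hj
  have hj1 : inducedPartsCard R j = 1 := by
    have := key j hj
    have : (inducedPartsCard R j : ℝ) = 1 := by linarith
    exact_mod_cast this
  exact subset_of_induced_eq_one (Q.nonempty_of_mem_parts hj) hj1

lemma eq_of_refines_refines {Q R : Finpartition (univ : Finset M)}
    (h1 : ∀ j ∈ Q.parts, ∃ r ∈ R.parts, j ⊆ r)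
    (h2 : ∀ j ∈ R.parts, ∃ r ∈ Q.parts, j ⊆ r) : Q = R := by
  have key : ∀ (P P' : Finpartition (univ : Finset M)),
      (∀ j ∈ P.parts, ∃ r ∈ P'.parts, j ⊆ r) →
      (∀ j ∈ P'.parts, ∃ r ∈ P.parts, j ⊆ r) → P.parts ⊆ P'.parts := by
    intro P P' hPP' hP'P q hq
    obtain ⟨r, hr, hqr⟩ := hPP' q hq
    obtain ⟨q', hq', hrq'⟩ := hP'P r hr
    obtain ⟨x, hx⟩ := P.nonempty_of_mem_parts hq
    have : q = q' := P.eq_of_mem_parts hq hq' hx (hrq' (hqr hx))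
    have hrq : r ⊆ q := this ▸ hrq'
    have : q = r := Finset.Subset.antisymm hqr hrq
    exact this ▸ hr
  exact Finpartition.ext (Finset.Subset.antisymm (key Q R h1 h2) (key R Q h2 h1))

lemma recall_self_eq_one {Q : Finpartition (univ : Finset M)}
    (hD : (∑ j ∈ Q.parts, ((j.card : ℝ) - 1)) ≠ 0) : mitreRecall Q Q = 1 := by
  unfold mitreRecall
  rw [show ∑ j ∈ Q.parts, ((j.card : ℝ) - (inducedPartsCard Q j : ℝ)) =
      ∑ j ∈ Q.parts, ((j.card : ℝ) - 1) from Finset.sum_congr rfl fun j hj => by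
    rw [induced_eq_one_of_subset (Q.nonempty_of_mem_parts hj) hj (le_refl j)]
    norm_num]
  exact div_self hD

end Aux

/-- For partitions `Q` and `R` of a finite set all of whose blocks have size at least 2
(and with `R_Q + R_R > 0`, so the F₁ score is defined), the G-MITRE loss vanishes if
and only if the two partitions coincide. -/
theorem gMitreLoss_eq_zero_iff {M : Type*} [Fintype M] [DecidableEq M]
    (Q R : Finpartition (univ : Finset M))
    (hQ : ∀ j ∈ Q.parts, 2 ≤ j.card) (hR : ∀ j ∈ R.parts, 2 ≤ j.card)
    (hpos : 0 < mitreRecall Q R + mitreRecall R Q) :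
    gMitreLoss Q R = 0 ↔ Q = R := by
  set a := mitreRecall Q R with ha_def
  set b := mitreRecall R Q with hb_def
  have ha0 : 0 ≤ a := recall_nonneg Q R
  have hb0 : 0 ≤ b := recall_nonneg R Q
  have ha1 : a ≤ 1 := recall_le_one Q R
  have hb1 : b ≤ 1 := recall_le_one R Q
  have hne : a + b ≠ 0 := ne_of_gt hpos
  constructor
  · intro h
    unfold gMitreLoss at h
    rw [sub_eq_zero, eq_comm, div_eq_one_iff_eq hne] at h
    -- h : 2 * a * b = a + b
    have hba : b ≤ a := by nlinarith
    have hab : a ≤ b := by nlinarith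
    have heq : a = b := le_antisymm hab hba
    have ha : a = 1 := by nlinarith
    have hb : b = 1 := heq ▸ ha
    exact eq_of_refines_refines (refines_of_recall_eq_one ha) (refines_of_recall_eq_one hb)
  · intro h
    subst h
    have heq : a = b := rfl
    have hapos : 0 < a := by linarith [heq ▸ hpos]
    have hD : (∑ j ∈ Q.parts, ((j.card : ℝ) - 1)) ≠ 0 := by
      intro h0
      rw [ha_def, mitreRecall, h0, div_zero] at hapos
      exact lt_irrefl 0 hapos
    have ha : a = 1 := recall_self_eq_one hD
    have hb : b = 1 := heq ▸ ha
    unfold gMitreLoss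
    rw [show mitreRecall Q Q = a from rfl, ha]
    norm_num
end
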